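/- Let U ⊆ ℂ be open with complex coordinate q, and let ψ, φ, η : U → ℝ be smooth with sin ψ ≠ 0 and cos ψ ≠ 0 on U. Assume: (a) ∂_q φ = i tan²ψ · ∂_q η and ∂_{q̄} φ = −i tan²ψ · ∂_{q̄} η; (b) the functions Λ₁₂ = e^{η + iφ}(∂_q ψ − i cot ψ · ∂_q φ) and Λ₂₁ = e^{−η − iφ}(∂_q ψ + i cot ψ · ∂_q φ) satisfy ∂_{q̄} Λ₁₂ = −e^{η + iφ} cos ψ sin ψ and ∂_{q̄} Λ₂₁ = −e^{−η − iφ} cos ψ sin ψ. Then ψ and φ satisfy the coupled system ∂_q ∂_{q̄} ψ + (cos ψ / sin³ψ) ∂_q φ · ∂_{q̄} φ + sin ψ cos ψ = 0 and ∂_q ∂_{q̄} φ = (1/(sin ψ cos ψ)) (∂_q φ · ∂_{q̄} ψ + ∂_{q̄} φ · ∂_q ψ). -/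

import Mathlib

open Complex

/-- Wirtinger derivative `∂_q F = (1/2)(∂_x F − i ∂_y F)` of `F : ℂ → ℂ`. -/
noncomputable def wq (F : ℂ → ℂ) (q : ℂ) : ℂ :=
  (1 / 2 : ℂ) * (fderiv ℝ F q 1 - Complex.I * fderiv ℝ F q Complex.I)

/-- Conjugate Wirtinger derivative `∂_q̄ F = (1/2)(∂_x F + i ∂_y F)`. -/
noncomputable def wqbar (F : ℂ → ℂ) (q : ℂ) : ℂ :=
  (1 / 2 : ℂ) * (fderiv ℝ F q 1 + Complex.I * fderiv ℝ F q Complex.I)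

section Lemmas
variable {F G : ℂ → ℂ} {q : ℂ}

lemma wqbar_add (hF : DifferentiableAt ℝ F q) (hG : DifferentiableAt ℝ G q) :
    wqbar (fun w => F w + G w) q = wqbar F q + wqbar G q := by
  simp only [wqbar, fderiv_fun_add hF hG, ContinuousLinearMap.add_apply]; ring

lemma wqbar_sub (hF : DifferentiableAt ℝ F q) (hG : DifferentiableAt ℝ G q) :
    wqbar (fun w => F w - G w) q = wqbar F q - wqbar G q := by
  simp only [wqbar, fderiv_fun_sub hF hG, ContinuousLinearMap.sub_apply]; ring

lemma wqbar_const_mul (c : ℂ) (hF : DifferentiableAt ℝ F q) :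
    wqbar (fun w => c * F w) q = c * wqbar F q := by
  simp only [wqbar, fderiv_const_mul hF c, ContinuousLinearMap.smul_apply, smul_eq_mul]; ring

lemma wqbar_neg (hF : DifferentiableAt ℝ F q) :
    wqbar (fun w => -(F w)) q = -(wqbar F q) := by
  have : (fun w => -(F w)) = fun w => (-1 : ℂ) * F w := by funext w; ring
  rw [this, wqbar_const_mul _ hF]; ring

lemma wqbar_mul (hF : DifferentiableAt ℝ F q) (hG : DifferentiableAt ℝ G q) :
    wqbar (fun w => F w * G w) q = wqbar F q * G q + F q * wqbar G q := by
  simp only [wqbar, fderiv_fun_mul hF hG, ContinuousLinearMap.add_apply,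
    ContinuousLinearMap.smul_apply, smul_eq_mul]; ring

lemma diff_comp {g : ℂ → ℂ} {g' : ℂ} (hg : HasDerivAt g g' (F q))
    (hF : DifferentiableAt ℝ F q) : DifferentiableAt ℝ (fun w => g (F w)) q :=
  (((hg.hasFDerivAt.restrictScalars ℝ).comp q hF.hasFDerivAt)).differentiableAt

lemma wqbar_comp {g : ℂ → ℂ} {g' : ℂ} (hg : HasDerivAt g g' (F q))
    (hF : DifferentiableAt ℝ F q) :
    wqbar (fun w => g (F w)) q = g' * wqbar F q := by
  have h : HasFDerivAt (fun w => g (F w))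
      (((ContinuousLinearMap.smulRight (1 : ℂ →L[ℂ] ℂ) g').restrictScalars ℝ).comp
        (fderiv ℝ F q)) q :=
    (hg.hasFDerivAt.restrictScalars ℝ).comp q hF.hasFDerivAt
  simp only [wqbar, h.fderiv, ContinuousLinearMap.coe_comp', Function.comp_apply,
    ContinuousLinearMap.coe_restrictScalars', ContinuousLinearMap.smulRight_apply,
    ContinuousLinearMap.one_apply, smul_eq_mul]
  ring

lemma wqbar_inv (hF : DifferentiableAt ℝ F q) (h0 : F q ≠ 0) :
    wqbar (fun w => (F w)⁻¹) q = -wqbar F q / (F q) ^ 2 := by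
  rw [wqbar_comp (hasDerivAt_inv h0) hF]; field_simp

lemma fderiv_fderiv_apply (hF : ContDiffAt ℝ (⊤ : ℕ∞) F q) (u v : ℂ) :
    fderiv ℝ (fun w => fderiv ℝ F w v) q u = fderiv ℝ (fderiv ℝ F) q u v := by
  have hd : DifferentiableAt ℝ (fderiv ℝ F) q := by
    have : ContDiffAt ℝ 1 (fderiv ℝ F) q := hF.fderiv_right (WithTop.coe_le_coe.mpr le_top)
    exact this.differentiableAt one_ne_zero
  have h : HasFDerivAt (fun w => fderiv ℝ F w v)
      ((ContinuousLinearMap.apply ℝ ℂ v).comp (fderiv ℝ (fderiv ℝ F) q)) q :=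
    ((ContinuousLinearMap.apply ℝ ℂ v).hasFDerivAt).comp q hd.hasFDerivAt
  rw [h.fderiv]; rfl

lemma diffAt_fderiv_apply (hF : ContDiffAt ℝ (⊤ : ℕ∞) F q) (v : ℂ) :
    DifferentiableAt ℝ (fun w => fderiv ℝ F w v) q := by
  have : ContDiffAt ℝ 1 (fderiv ℝ F) q := hF.fderiv_right (WithTop.coe_le_coe.mpr le_top)
  exact (this.clm_apply contDiffAt_const).differentiableAt one_ne_zero

lemma wq_differentiableAt (hF : ContDiffAt ℝ (⊤ : ℕ∞) F q) : DifferentiableAt ℝ (wq F) q := by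
  have h1 := diffAt_fderiv_apply hF 1
  have hI := diffAt_fderiv_apply hF Complex.I
  exact (DifferentiableAt.sub h1 (hI.const_mul _)).const_mul _

lemma wq_wqbar_comm (hF : ContDiffAt ℝ (⊤ : ℕ∞) F q) :
    wq (wqbar F) q = wqbar (wq F) q := by
  have h1 := diffAt_fderiv_apply hF 1
  have hI := diffAt_fderiv_apply hF Complex.I
  have hsymm : IsSymmSndFDerivAt ℝ F q :=
    hF.isSymmSndFDerivAt (by
      rw [minSmoothness_of_isRCLikeNormedField]; exact WithTop.coe_le_coe.mpr le_top)
  have key : fderiv ℝ (fun w => fderiv ℝ F w Complex.I) q 1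
      = fderiv ℝ (fun w => fderiv ℝ F w 1) q Complex.I := by
    rw [fderiv_fderiv_apply hF, fderiv_fderiv_apply hF, hsymm.eq]
  have ewqbar : wqbar F = fun w => (1/2 : ℂ) * (fderiv ℝ F w 1 + Complex.I * fderiv ℝ F w Complex.I) := rfl
  have ewq : wq F = fun w => (1/2 : ℂ) * (fderiv ℝ F w 1 - Complex.I * fderiv ℝ F w Complex.I) := rfl
  have lhs : wq (wqbar F) q = (1/2 : ℂ) *
      ((1/2 : ℂ) * (fderiv ℝ (fun w => fderiv ℝ F w 1) q 1
          + Complex.I * fderiv ℝ (fun w => fderiv ℝ F w Complex.I) q 1)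
        - Complex.I * ((1/2 : ℂ) * (fderiv ℝ (fun w => fderiv ℝ F w 1) q Complex.I
          + Complex.I * fderiv ℝ (fun w => fderiv ℝ F w Complex.I) q Complex.I))) := by
    simp only [wq, ewqbar]
    rw [fderiv_const_mul (a := fun w => fderiv ℝ F w 1 + Complex.I * fderiv ℝ F w Complex.I)
        (h1.add (hI.const_mul _)) _,
      fderiv_fun_add h1 (hI.const_mul _), fderiv_const_mul hI]
    simp only [ContinuousLinearMap.smul_apply, ContinuousLinearMap.add_apply, smul_eq_mul]
  have rhs : wqbar (wq F) q = (1/2 : ℂ) *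
      ((1/2 : ℂ) * (fderiv ℝ (fun w => fderiv ℝ F w 1) q 1
          - Complex.I * fderiv ℝ (fun w => fderiv ℝ F w Complex.I) q 1)
        + Complex.I * ((1/2 : ℂ) * (fderiv ℝ (fun w => fderiv ℝ F w 1) q Complex.I
          - Complex.I * fderiv ℝ (fun w => fderiv ℝ F w Complex.I) q Complex.I))) := by
    simp only [wqbar, ewq]
    rw [fderiv_const_mul (a := fun w => fderiv ℝ F w 1 - Complex.I * fderiv ℝ F w Complex.I)
        (h1.sub (hI.const_mul _)) _,
      fderiv_fun_sub h1 (hI.const_mul _), fderiv_const_mul hI]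
    simp only [ContinuousLinearMap.smul_apply, ContinuousLinearMap.sub_apply, smul_eq_mul]
  rw [lhs, rhs, key]; ring

end Lemmas

/-- From the `n = 2` deformation equations in the parametrization of the
paper, the angles `ψ, φ` satisfy the reduced sinh-Gordon-type system
`∂_q∂_q̄ψ + (cos ψ/sin³ψ) ∂_qφ ∂_q̄φ + sin ψ cos ψ = 0` and
`∂_q∂_q̄φ = (1/(sin ψ cos ψ))(∂_qφ ∂_q̄ψ + ∂_q̄φ ∂_qψ)`. -/
theorem reduced_sinh_gordon_system
    (U : Set ℂ) (hU : IsOpen U)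
    (ψ φ η : ℂ → ℝ)
    (hψ : ContDiffOn ℝ (⊤ : ℕ∞) ψ U) (hφ : ContDiffOn ℝ (⊤ : ℕ∞) φ U) (hη : ContDiffOn ℝ (⊤ : ℕ∞) η U)
    (hsin : ∀ q ∈ U, Real.sin (ψ q) ≠ 0) (hcos : ∀ q ∈ U, Real.cos (ψ q) ≠ 0)
    (ha₁ : ∀ q ∈ U, wq (fun w => (φ w : ℂ)) q
      = Complex.I * ((Real.tan (ψ q) : ℂ)) ^ 2 * wq (fun w => (η w : ℂ)) q)
    (ha₂ : ∀ q ∈ U, wqbar (fun w => (φ w : ℂ)) q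
      = -Complex.I * ((Real.tan (ψ q) : ℂ)) ^ 2 * wqbar (fun w => (η w : ℂ)) q)
    (hb₁ : ∀ q ∈ U,
      wqbar (fun w => Complex.exp ((η w : ℂ) + Complex.I * (φ w : ℂ)) *
          (wq (fun v => (ψ v : ℂ)) w
            - Complex.I * (Real.cot (ψ w) : ℂ) * wq (fun v => (φ v : ℂ)) w)) q
        = -Complex.exp ((η q : ℂ) + Complex.I * (φ q : ℂ)) *
            (Real.cos (ψ q) : ℂ) * (Real.sin (ψ q) : ℂ))
    (hb₂ : ∀ q ∈ U,
      wqbar (fun w => Complex.exp (-((η w : ℂ) + Complex.I * (φ w : ℂ))) *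
          (wq (fun v => (ψ v : ℂ)) w
            + Complex.I * (Real.cot (ψ w) : ℂ) * wq (fun v => (φ v : ℂ)) w)) q
        = -Complex.exp (-((η q : ℂ) + Complex.I * (φ q : ℂ))) *
            (Real.cos (ψ q) : ℂ) * (Real.sin (ψ q) : ℂ)) :
    ∀ q ∈ U,
      wq (fun w => wqbar (fun v => (ψ v : ℂ)) w) q
          + ((Real.cos (ψ q) : ℂ) / (Real.sin (ψ q) : ℂ) ^ 3) *
            (wq (fun v => (φ v : ℂ)) q * wqbar (fun v => (φ v : ℂ)) q)
          + (Real.sin (ψ q) : ℂ) * (Real.cos (ψ q) : ℂ) = 0 ∧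
      wq (fun w => wqbar (fun v => (φ v : ℂ)) w) q
        = (1 / ((Real.sin (ψ q) : ℂ) * (Real.cos (ψ q) : ℂ))) *
            (wq (fun v => (φ v : ℂ)) q * wqbar (fun v => (ψ v : ℂ)) q
              + wqbar (fun v => (φ v : ℂ)) q * wq (fun v => (ψ v : ℂ)) q) := by
  intro q hq
  have hmem : U ∈ nhds q := hU.mem_nhds hq
  -- smoothness of coerced maps
  have hψC : ContDiffAt ℝ (⊤ : ℕ∞) (fun w => ((ψ w : ℂ))) q :=
    (Complex.ofRealCLM.contDiff.comp_contDiffOn hψ).contDiffAt hmem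
  have hφC : ContDiffAt ℝ (⊤ : ℕ∞) (fun w => ((φ w : ℂ))) q :=
    (Complex.ofRealCLM.contDiff.comp_contDiffOn hφ).contDiffAt hmem
  have hηC : ContDiffAt ℝ (⊤ : ℕ∞) (fun w => ((η w : ℂ))) q :=
    (Complex.ofRealCLM.contDiff.comp_contDiffOn hη).contDiffAt hmem
  have dψ : DifferentiableAt ℝ (fun w => ((ψ w : ℂ))) q := hψC.differentiableAt (by simp)
  have dφ : DifferentiableAt ℝ (fun w => ((φ w : ℂ))) q := hφC.differentiableAt (by simp)
  have dη : DifferentiableAt ℝ (fun w => ((η w : ℂ))) q := hηC.differentiableAt (by simp)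
  -- nonvanishing
  have hs : ((Real.sin (ψ q) : ℂ)) ≠ 0 := by
    exact_mod_cast Complex.ofReal_ne_zero.mpr (hsin q hq)
  have hc : ((Real.cos (ψ q) : ℂ)) ≠ 0 := by
    exact_mod_cast Complex.ofReal_ne_zero.mpr (hcos q hq)
  have hsq : Complex.sin ((ψ q : ℂ)) ≠ 0 := by rw [← Complex.ofReal_sin]; exact hs
  have pyth : ((Real.sin (ψ q) : ℂ))^2 + ((Real.cos (ψ q) : ℂ))^2 = 1 := by
    push_cast; exact Complex.sin_sq_add_cos_sq _
  -- cot as cos * sin⁻¹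
  have ecot : (fun w => ((Real.cot (ψ w) : ℂ)))
      = fun w => Complex.cos ((ψ w : ℂ)) * (Complex.sin ((ψ w : ℂ)))⁻¹ := by
    funext w; rw [Real.cot_eq_cos_div_sin]; push_cast; ring
  have dcosF : DifferentiableAt ℝ (fun w => Complex.cos ((ψ w : ℂ))) q :=
    diff_comp (Complex.hasDerivAt_cos _) dψ
  have dsinF : DifferentiableAt ℝ (fun w => Complex.sin ((ψ w : ℂ))) q :=
    diff_comp (Complex.hasDerivAt_sin _) dψ
  have dinvF : DifferentiableAt ℝ (fun w => (Complex.sin ((ψ w : ℂ)))⁻¹) q :=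
    dsinF.inv hsq
  have dcot : DifferentiableAt ℝ (fun w => ((Real.cot (ψ w) : ℂ))) q := by
    rw [ecot]; exact dcosF.mul dinvF
  -- the wqbar of cot
  have hW : wqbar (fun w => ((Real.cot (ψ w) : ℂ))) q * ((Real.sin (ψ q) : ℂ))^2
      = -(wqbar (fun v => ((ψ v : ℂ))) q) := by
    rw [Complex.ofReal_sin, ecot, wqbar_mul dcosF dinvF, wqbar_inv dsinF hsq,
      wqbar_comp (Complex.hasDerivAt_cos _) dψ, wqbar_comp (Complex.hasDerivAt_sin _) dψ]
    have py2 : Complex.sin ((ψ q : ℂ))^2 + Complex.cos ((ψ q : ℂ))^2 = 1 :=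
      Complex.sin_sq_add_cos_sq _
    field_simp
    linear_combination (-wqbar (fun v => ((ψ v : ℂ))) q) * py2
  -- cot value relation
  have hct : ((Real.cot (ψ q) : ℂ)) * ((Real.sin (ψ q) : ℂ)) = ((Real.cos (ψ q) : ℂ)) := by
    rw [Real.cot_eq_cos_div_sin]; push_cast; field_simp
  -- relation from (a₂)
  have ha' : wqbar (fun w => ((φ w : ℂ))) q * ((Real.cos (ψ q) : ℂ))^2
      = -Complex.I * ((Real.sin (ψ q) : ℂ))^2 * wqbar (fun w => ((η w : ℂ))) q := by
    have h := ha₂ q hq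
    rw [Real.tan_eq_sin_div_cos] at h
    push_cast at h
    rw [Complex.ofReal_sin, Complex.ofReal_cos]
    have hcq : Complex.cos ((ψ q : ℂ)) ≠ 0 := by rw [← Complex.ofReal_cos]; exact hc
    field_simp at h ⊢
    linear_combination h
  -- differentiability of first-order pieces
  have dwψ : DifferentiableAt ℝ (wq (fun v => ((ψ v : ℂ)))) q := wq_differentiableAt hψC
  have dwφ : DifferentiableAt ℝ (wq (fun v => ((φ v : ℂ)))) q := wq_differentiableAt hφC
  have dh : DifferentiableAt ℝ (fun w => ((η w : ℂ)) + Complex.I * ((φ w : ℂ))) q :=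
    dη.add (dφ.const_mul _)
  have dexp : DifferentiableAt ℝ
      (fun w => Complex.exp ((η w : ℂ) + Complex.I * (φ w : ℂ))) q :=
    diff_comp (Complex.hasDerivAt_exp _) dh
  have dexp2 : DifferentiableAt ℝ
      (fun w => Complex.exp (-((η w : ℂ) + Complex.I * (φ w : ℂ)))) q :=
    diff_comp (Complex.hasDerivAt_exp _) dh.neg
  have dIcot : DifferentiableAt ℝ (fun w => Complex.I * ((Real.cot (ψ w) : ℂ))) q :=
    dcot.const_mul _
  have dprod : DifferentiableAt ℝ
      (fun w => Complex.I * ((Real.cot (ψ w) : ℂ)) * wq (fun v => ((φ v : ℂ))) w) q :=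
    dIcot.mul dwφ
  have dG₁ : DifferentiableAt ℝ (fun w => wq (fun v => ((ψ v : ℂ))) w
      - Complex.I * ((Real.cot (ψ w) : ℂ)) * wq (fun v => ((φ v : ℂ))) w) q :=
    dwψ.sub dprod
  have dG₂ : DifferentiableAt ℝ (fun w => wq (fun v => ((ψ v : ℂ))) w
      + Complex.I * ((Real.cot (ψ w) : ℂ)) * wq (fun v => ((φ v : ℂ))) w) q :=
    dwψ.add dprod
  -- wqbar of the exponential factors
  have wexp1 : wqbar (fun w => Complex.exp ((η w : ℂ) + Complex.I * (φ w : ℂ))) q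
      = Complex.exp ((η q : ℂ) + Complex.I * (φ q : ℂ)) *
        (wqbar (fun w => ((η w : ℂ))) q + Complex.I * wqbar (fun w => ((φ w : ℂ))) q) := by
    rw [wqbar_comp (Complex.hasDerivAt_exp _) dh, wqbar_add dη (dφ.const_mul _),
      wqbar_const_mul _ dφ]
  have wexp2 : wqbar (fun w => Complex.exp (-((η w : ℂ) + Complex.I * (φ w : ℂ)))) q
      = Complex.exp (-((η q : ℂ) + Complex.I * (φ q : ℂ))) *
        (-(wqbar (fun w => ((η w : ℂ))) q + Complex.I * wqbar (fun w => ((φ w : ℂ))) q)) := by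
    rw [wqbar_comp (F := fun w => -((η w : ℂ) + Complex.I * (φ w : ℂ))) (Complex.hasDerivAt_exp _) dh.neg, wqbar_neg dh,
      wqbar_add dη (dφ.const_mul _), wqbar_const_mul _ dφ]
  -- expand hb₁ and hb₂
  have hb1 := hb₁ q hq
  have hb2 := hb₂ q hq
  rw [wqbar_mul dexp dG₁, wexp1, wqbar_sub dwψ dprod, wqbar_mul dIcot dwφ,
    wqbar_const_mul _ dcot] at hb1
  rw [wqbar_mul dexp2 dG₂, wexp2, wqbar_add dwψ dprod, wqbar_mul dIcot dwφ,
    wqbar_const_mul _ dcot] at hb2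
  -- abbreviations
  set s : ℂ := ((Real.sin (ψ q) : ℂ)) with hs_def
  set c : ℂ := ((Real.cos (ψ q) : ℂ)) with hc_def
  set ct : ℂ := ((Real.cot (ψ q) : ℂ)) with hct_def
  set P : ℂ := wq (fun v => ((ψ v : ℂ))) q with hP_def
  set Fq : ℂ := wq (fun v => ((φ v : ℂ))) q with hFq_def
  set Pb : ℂ := wqbar (fun v => ((ψ v : ℂ))) q with hPb_def
  set Fb : ℂ := wqbar (fun v => ((φ v : ℂ))) q with hFb_def
  set Eb : ℂ := wqbar (fun v => ((η v : ℂ))) q with hEb_def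
  set W : ℂ := wqbar (fun w => ((Real.cot (ψ w) : ℂ))) q with hWdef
  set Mps : ℂ := wqbar (wq (fun v => ((ψ v : ℂ)))) q with hMps_def
  set Mph : ℂ := wqbar (wq (fun v => ((φ v : ℂ)))) q with hMph_def
  have hEne : Complex.exp ((η q : ℂ) + Complex.I * (φ q : ℂ)) ≠ 0 := Complex.exp_ne_zero _
  have hEne2 : Complex.exp (-((η q : ℂ) + Complex.I * (φ q : ℂ))) ≠ 0 := Complex.exp_ne_zero _
  have e1 : (Eb + Complex.I * Fb) * (P - Complex.I * ct * Fq)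
      + (Mps - (Complex.I * W * Fq + Complex.I * ct * Mph)) = -(c * s) := by
    apply mul_left_cancel₀ hEne
    linear_combination hb1
  have e2 : (-(Eb + Complex.I * Fb)) * (P + Complex.I * ct * Fq)
      + (Mps + (Complex.I * W * Fq + Complex.I * ct * Mph)) = -(c * s) := by
    apply mul_left_cancel₀ hEne2
    linear_combination hb2
  -- cleaned second-order identities
  have g1 : Mps * s^3 + c * (Fq * Fb) + s^4 * c = 0 := by
    linear_combination (s^3/2) * e1 + (s^3/2) * e2
      + (Complex.I * Eb * s^2 * Fq - s^2 * Fq * Fb) * hct + c * Fq * ha'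
      - c * Fq * Fb * pyth + s^3 * Fq * Fb * ct * Complex.I_sq
  have g2 : Mph * s * c = Fq * Pb + Fb * P := by
    linear_combination (Complex.I * s^2 / 2) * e1 - (Complex.I * s^2 / 2) * e2
      + Fb * P * pyth - P * ha' - Fq * hW - s * Mph * hct
      + (s^2 * W * Fq + s^2 * ct * Mph - s^2 * Fb * P) * Complex.I_sq
  constructor
  · rw [show (fun w => wqbar (fun v => ((ψ v : ℂ))) w) = wqbar (fun v => ((ψ v : ℂ))) from rfl,
      wq_wqbar_comm hψC]
    rw [← hMps_def]
    field_simp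
    linear_combination g1
  · rw [show (fun w => wqbar (fun v => ((φ v : ℂ))) w) = wqbar (fun v => ((φ v : ℂ))) from rfl,
      wq_wqbar_comm hφC]
    rw [← hMph_def]
    field_simp
    linear_combination g2
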